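/- arXiv:2605.23173 — 5 statements merged into one kernel-verified Lean document; each statement's English description precedes it below -/
import Mathlib

section
/- Let Φ : ℝ×ℝ → ℝ^{N×N} be the evolution operator of a linear nonautonomous equation admitting a nonuniform μ-dichotomy with parameters (P; K, α, β, θ, ν). Then for every τ ∈ ℝ, the translated operator Φ_τ(t,s) := Φ(t+τ, s+τ) admits a nonuniform μ_τ-dichotomy with projector P_τ(s) := P(s+τ), the same exponents α, β, θ, ν, and constant K_τ := K · μ(τ)^{3 sgn(τ) max{θ,ν}}, where μ_τ(t) = μ(t+τ)/μ(τ). -/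
open Filter

def IsGrowthRate (μ : ℝ → ℝ) : Prop :=
  StrictMono μ ∧ (∀ t, 0 < μ t) ∧ Differentiable ℝ μ ∧ μ 0 = 1 ∧
    Tendsto μ atTop atTop ∧ Tendsto μ atBot (nhds 0)

lemma key_translate (μ : ℝ → ℝ) (hμ : IsGrowthRate μ) (c M τ s : ℝ)
    (hc : 0 ≤ c) (hcM : c ≤ M) :
    μ (s + τ) ^ (Real.sign (s + τ) * c) ≤
      μ τ ^ (3 * Real.sign τ * M) * (μ (s + τ) / μ τ) ^ (Real.sign s * c) := by
  obtain ⟨hmono, hpos, _, h0, _, _⟩ := hμ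
  have ha : (0:ℝ) < μ (s + τ) := hpos _
  have hm : (0:ℝ) < μ τ := hpos _
  have hM : (0:ℝ) ≤ M := hc.trans hcM
  rw [← Real.log_le_log_iff (by positivity) (by positivity),
    Real.log_rpow ha, Real.log_mul (by positivity) (by positivity),
    Real.log_rpow hm, Real.log_rpow (by positivity),
    Real.log_div (ne_of_gt ha) (ne_of_gt hm)]
  set La := Real.log (μ (s + τ)) with hLa
  set Lm := Real.log (μ τ) with hLm
  have e1 : Real.sign (s + τ) * La = |La| := by
    rcases lt_trichotomy (s + τ) 0 with h | h | h
    · have : La < 0 := Real.log_neg ha (by rw [← h0]; exact hmono h)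
      rw [Real.sign_of_neg h, abs_of_neg this]; ring
    · have : La = 0 := by rw [hLa, h, h0, Real.log_one]
      simp [this]
    · have : 0 < La := Real.log_pos (by rw [← h0]; exact hmono h)
      rw [Real.sign_of_pos h, abs_of_pos this]; ring
  have e2 : Real.sign τ * Lm = |Lm| := by
    rcases lt_trichotomy τ 0 with h | h | h
    · have : Lm < 0 := Real.log_neg hm (by rw [← h0]; exact hmono h)
      rw [Real.sign_of_neg h, abs_of_neg this]; ring
    · have : Lm = 0 := by rw [hLm, h, h0, Real.log_one]
      simp [this]
    · have : 0 < Lm := Real.log_pos (by rw [← h0]; exact hmono h)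
      rw [Real.sign_of_pos h, abs_of_pos this]; ring
  have e3 : Real.sign s * (La - Lm) = |La - Lm| := by
    rcases lt_trichotomy s 0 with h | h | h
    · have : La < Lm := Real.log_lt_log ha (hmono (by linarith))
      rw [Real.sign_of_neg h, abs_of_neg (by linarith)]; ring
    · have : La = Lm := by rw [hLa, hLm, h, zero_add]
      simp [this]
    · have : Lm < La := Real.log_lt_log hm (hmono (by linarith))
      rw [Real.sign_of_pos h, abs_of_pos (by linarith)]; ring
  have tri : |La| ≤ |La - Lm| + |Lm| := by
    calc |La| = |(La - Lm) + Lm| := by ring_nf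
    _ ≤ |La - Lm| + |Lm| := abs_add_le _ _
  have goal1 : Real.sign (s + τ) * c * La = c * |La| := by rw [← e1]; ring
  have goal2 : Real.sign s * c * (La - Lm) = c * |La - Lm| := by rw [← e3]; ring
  have goal3 : 3 * Real.sign τ * M * Lm = 3 * M * |Lm| := by rw [← e2]; ring
  rw [goal1, goal2, goal3]
  nlinarith [mul_le_mul_of_nonneg_left tri hc, abs_nonneg Lm,
    mul_le_mul_of_nonneg_right hcM (abs_nonneg Lm)]

/-- Lemma 2.5: propagation of nonuniform μ-dichotomy to translated systems. -/
theorem nonuniform_dichotomy_translates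
    (N : ℕ) (μ : ℝ → ℝ) (hμ : IsGrowthRate μ)
    (Φ : ℝ → ℝ → (EuclideanSpace ℝ (Fin N) →L[ℝ] EuclideanSpace ℝ (Fin N)))
    (P : ℝ → (EuclideanSpace ℝ (Fin N) →L[ℝ] EuclideanSpace ℝ (Fin N)))
    (K α β θ ν : ℝ) (hK : 1 ≤ K) (hα : α < 0) (hβ : 0 < β) (hθ : 0 ≤ θ) (hν : 0 ≤ ν)
    (hαθ : α + θ < 0) (hβν : 0 < β - ν)
    (hproj : ∀ s, (P s).comp (P s) = P s)
    (hinv : ∀ t s, (P t).comp (Φ t s) = (Φ t s).comp (P s))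
    (hstable : ∀ t s, s ≤ t →
      ‖(Φ t s).comp (P s)‖ ≤ K * (μ t / μ s) ^ α * (μ s) ^ (Real.sign s * θ))
    (hunstable : ∀ t s, t ≤ s →
      ‖(Φ t s).comp (1 - P s)‖ ≤ K * (μ t / μ s) ^ β * (μ s) ^ (Real.sign s * ν))
    (τ : ℝ) :
    (∀ t s, s ≤ t →
      ‖(Φ (t + τ) (s + τ)).comp (P (s + τ))‖ ≤
        (K * μ τ ^ (3 * Real.sign τ * max θ ν)) *
          ((μ (t + τ) / μ τ) / (μ (s + τ) / μ τ)) ^ α *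
          (μ (s + τ) / μ τ) ^ (Real.sign s * θ)) ∧
    (∀ t s, t ≤ s →
      ‖(Φ (t + τ) (s + τ)).comp (1 - P (s + τ))‖ ≤
        (K * μ τ ^ (3 * Real.sign τ * max θ ν)) *
          ((μ (t + τ) / μ τ) / (μ (s + τ) / μ τ)) ^ β *
          (μ (s + τ) / μ τ) ^ (Real.sign s * ν)) := by
  obtain ⟨hmono, hpos, hdiff, h0, htop, hbot⟩ := hμ
  have hK0 : (0:ℝ) < K := lt_of_lt_of_le one_pos hK
  have hratio : ∀ t s : ℝ, (μ (t + τ) / μ τ) / (μ (s + τ) / μ τ) = μ (t + τ) / μ (s + τ) := by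
    intro t s
    have hm : (μ τ) ≠ 0 := ne_of_gt (hpos τ)
    field_simp
  constructor
  · intro t s hst
    have h1 := hstable (t + τ) (s + τ) (by linarith)
    have h2 := key_translate μ ⟨hmono, hpos, hdiff, h0, htop, hbot⟩ θ (max θ ν) τ s hθ
      (le_max_left _ _)
    rw [hratio]
    have hr : (0:ℝ) < (μ (t + τ) / μ (s + τ)) ^ α :=
      Real.rpow_pos_of_pos (div_pos (hpos _) (hpos _)) _
    calc ‖(Φ (t + τ) (s + τ)).comp (P (s + τ))‖
        ≤ K * (μ (t + τ) / μ (s + τ)) ^ α * μ (s + τ) ^ (Real.sign (s + τ) * θ) := h1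
      _ ≤ K * (μ (t + τ) / μ (s + τ)) ^ α *
          (μ τ ^ (3 * Real.sign τ * max θ ν) * (μ (s + τ) / μ τ) ^ (Real.sign s * θ)) :=
          mul_le_mul_of_nonneg_left h2 (mul_nonneg hK0.le hr.le)
      _ = K * μ τ ^ (3 * Real.sign τ * max θ ν) * (μ (t + τ) / μ (s + τ)) ^ α *
          (μ (s + τ) / μ τ) ^ (Real.sign s * θ) := by ring
  · intro t s hst
    have h1 := hunstable (t + τ) (s + τ) (by linarith)
    have h2 := key_translate μ ⟨hmono, hpos, hdiff, h0, htop, hbot⟩ ν (max θ ν) τ s hν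
      (le_max_right _ _)
    rw [hratio]
    have hr : (0:ℝ) < (μ (t + τ) / μ (s + τ)) ^ β :=
      Real.rpow_pos_of_pos (div_pos (hpos _) (hpos _)) _
    calc ‖(Φ (t + τ) (s + τ)).comp (1 - P (s + τ))‖
        ≤ K * (μ (t + τ) / μ (s + τ)) ^ β * μ (s + τ) ^ (Real.sign (s + τ) * ν) := h1
      _ ≤ K * (μ (t + τ) / μ (s + τ)) ^ β *
          (μ τ ^ (3 * Real.sign τ * max θ ν) * (μ (s + τ) / μ τ) ^ (Real.sign s * ν)) :=
          mul_le_mul_of_nonneg_left h2 (mul_nonneg hK0.le hr.le)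
      _ = K * μ τ ^ (3 * Real.sign τ * max θ ν) * (μ (t + τ) / μ (s + τ)) ^ β *
          (μ (s + τ) / μ τ) ^ (Real.sign s * ν) := by ring
end

section
/- Suppose the evolution operator Φ satisfies nonuniform μ-bounded growth: ‖Φ(t,s)‖ ≤ L (μ(t)/μ(s))^{sgn(t−s)·a} μ(s)^{sgn(s)·ε} for all t,s ∈ ℝ, with L ≥ 1, a > 0, ε ≥ 0. Then for every τ ∈ ℝ the translated operator Φ_τ(t,s) = Φ(t+τ,s+τ) satisfies ‖Φ_τ(t,s)‖ ≤ L_τ (μ_τ(t)/μ_τ(s))^{sgn(t−s)·a} μ_τ(s)^{sgn(s)·ε} for all t,s ∈ ℝ, where L_τ = L·μ(τ)^{3 sgn(τ)ε} and μ_τ(t) = μ(t+τ)/μ(τ). -/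
open Filter

lemma sign_log_ineq (X M ε : ℝ) (hε : 0 ≤ ε) (α β γ : ℝ)
    (hα : α = -1 ∧ X < 0 ∨ α = 0 ∧ X = 0 ∨ α = 1 ∧ 0 < X)
    (hγ : γ = -1 ∧ M < 0 ∨ γ = 0 ∧ M = 0 ∨ γ = 1 ∧ 0 < M)
    (hβ : β = -1 ∧ X < M ∨ β = 0 ∧ X = M ∨ β = 1 ∧ M < X) :
    X * (α * ε) ≤ M * (3 * γ * ε) + (X - M) * (β * ε) := by
  rcases hα with ⟨rfl, hX⟩ | ⟨rfl, hX⟩ | ⟨rfl, hX⟩ <;>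
    rcases hγ with ⟨rfl, hM⟩ | ⟨rfl, hM⟩ | ⟨rfl, hM⟩ <;>
      rcases hβ with ⟨rfl, hXM⟩ | ⟨rfl, hXM⟩ | ⟨rfl, hXM⟩ <;>
        nlinarith [hε, hX, hM, hXM, mul_nonneg hε hε]

/-- Lemma 2.12: propagation of nonuniform μ-bounded growth to translated systems. -/
theorem nonuniform_bounded_growth_translates
    (N : ℕ) (μ : ℝ → ℝ) (hμ : IsGrowthRate μ)
    (Φ : ℝ → ℝ → (EuclideanSpace ℝ (Fin N) →L[ℝ] EuclideanSpace ℝ (Fin N)))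
    (L a ε : ℝ) (hL : 1 ≤ L) (ha : 0 < a) (hε : 0 ≤ ε)
    (hgrowth : ∀ t s, ‖Φ t s‖ ≤
      L * (μ t / μ s) ^ (Real.sign (t - s) * a) * (μ s) ^ (Real.sign s * ε))
    (τ : ℝ) :
    ∀ t s, ‖Φ (t + τ) (s + τ)‖ ≤
      (L * μ τ ^ (3 * Real.sign τ * ε)) *
        ((μ (t + τ) / μ τ) / (μ (s + τ) / μ τ)) ^ (Real.sign (t - s) * a) *
        (μ (s + τ) / μ τ) ^ (Real.sign s * ε) := by
  obtain ⟨hmono, hpos, -, hone, -, -⟩ := hμ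
  intro t s
  have hx : 0 < μ (s + τ) := hpos _
  have hm : 0 < μ τ := hpos _
  have hy : 0 < μ (t + τ) := hpos _
  have hlogpos : ∀ u : ℝ, 0 < u → 0 < Real.log (μ u) := fun u hu =>
    Real.log_pos (by rw [← hone]; exact hmono hu)
  have hlogneg : ∀ u : ℝ, u < 0 → Real.log (μ u) < 0 := fun u hu =>
    Real.log_neg (hpos u) (by rw [← hone]; exact hmono hu)
  -- key inequality
  have hkey : μ (s + τ) ^ (Real.sign (s + τ) * ε) ≤
      μ τ ^ (3 * Real.sign τ * ε) * (μ (s + τ) / μ τ) ^ (Real.sign s * ε) := by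
    rw [Real.rpow_def_of_pos hx, Real.rpow_def_of_pos hm,
      Real.rpow_def_of_pos (div_pos hx hm), ← Real.exp_add, Real.exp_le_exp,
      Real.log_div hx.ne' hm.ne']
    refine sign_log_ineq _ _ _ hε _ _ _ ?_ ?_ ?_
    · rcases lt_trichotomy (s + τ) 0 with h | h | h
      · exact Or.inl ⟨Real.sign_of_neg h, hlogneg _ h⟩
      · refine Or.inr (Or.inl ⟨by rw [h, Real.sign_zero], ?_⟩)
        rw [h, hone, Real.log_one]
      · exact Or.inr (Or.inr ⟨Real.sign_of_pos h, hlogpos _ h⟩)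
    · rcases lt_trichotomy τ 0 with h | h | h
      · exact Or.inl ⟨Real.sign_of_neg h, hlogneg _ h⟩
      · refine Or.inr (Or.inl ⟨by rw [h, Real.sign_zero], ?_⟩)
        rw [h, hone, Real.log_one]
      · exact Or.inr (Or.inr ⟨Real.sign_of_pos h, hlogpos _ h⟩)
    · rcases lt_trichotomy s 0 with h | h | h
      · exact Or.inl ⟨Real.sign_of_neg h,
          Real.log_lt_log hx (hmono (by linarith))⟩
      · refine Or.inr (Or.inl ⟨by rw [h, Real.sign_zero], by rw [h, zero_add]⟩)
      · exact Or.inr (Or.inr ⟨Real.sign_of_pos h,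
          Real.log_lt_log hm (hmono (by linarith))⟩)
  have hB : (μ (t + τ) / μ τ) / (μ (s + τ) / μ τ) = μ (t + τ) / μ (s + τ) := by
    field_simp
  have hA : 0 < (μ (t + τ) / μ (s + τ)) ^ (Real.sign (t - s) * a) :=
    Real.rpow_pos_of_pos (div_pos hy hx) _
  have hLA : 0 ≤ L * (μ (t + τ) / μ (s + τ)) ^ (Real.sign (t - s) * a) :=
    mul_nonneg (by linarith) hA.le
  calc ‖Φ (t + τ) (s + τ)‖
      ≤ L * (μ (t + τ) / μ (s + τ)) ^ (Real.sign ((t + τ) - (s + τ)) * a) *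
        μ (s + τ) ^ (Real.sign (s + τ) * ε) := hgrowth _ _
    _ = L * (μ (t + τ) / μ (s + τ)) ^ (Real.sign (t - s) * a) *
        μ (s + τ) ^ (Real.sign (s + τ) * ε) := by ring_nf
    _ ≤ L * (μ (t + τ) / μ (s + τ)) ^ (Real.sign (t - s) * a) *
        (μ τ ^ (3 * Real.sign τ * ε) * (μ (s + τ) / μ τ) ^ (Real.sign s * ε)) :=
        mul_le_mul_of_nonneg_left hkey hLA
    _ = (L * μ τ ^ (3 * Real.sign τ * ε)) *
        ((μ (t + τ) / μ τ) / (μ (s + τ) / μ τ)) ^ (Real.sign (t - s) * a) *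
        (μ (s + τ) / μ τ) ^ (Real.sign s * ε) := by rw [hB]; ring
end

section
/- For 0 < r₁ < r₂ < 1, the subexponential rates satisfy u_{r₁} ≪ u_{r₂}: for all α, α̃ < 0 there exists M ≥ 1 such that (u_{r₂}(t)/u_{r₂}(s))^α ≤ M (u_{r₁}(t)/u_{r₁}(s))^{α̃} for all t ≥ s, where u_r(t) = exp(sgn(t)((|t|+1)^r − 1)). -/
noncomputable def subexpRate (r : ℝ) (t : ℝ) : ℝ := Real.exp (Real.sign t * ((|t| + 1) ^ r - 1))

/-!
Write `u_r = exp ∘ φ_r` with `φ_r = subexpExponent r`. Since `φ_r` preserves signs and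
`|φ_r t| + 1 = (|t| + 1) ^ r`, the exponents compose as `φ_{r₁} = φ_ρ ∘ φ_{r₂}` with
`ρ = r₁ / r₂ < 1`. Subadditivity of `x ↦ x ^ ρ` makes `φ_ρ` Hölder,
`φ_ρ y - φ_ρ x ≤ 2 (y - x) ^ ρ`, and `z ^ ρ ≤ K + c z` for every `c > 0` (weighted AM-GM).
Hence every increment of `φ_{r₁}` is at most a constant plus an arbitrarily small multiple of the
corresponding increment of `φ_{r₂}`, which after exponentiation is the claim.
-/

open Real

noncomputable def subexpExponent (r t : ℝ) : ℝ := Real.sign t * ((|t| + 1) ^ r - 1)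

lemma subexpRate_eq_exp (r t : ℝ) : subexpRate r t = exp (subexpExponent r t) := rfl

@[simp]
lemma subexpExponent_zero (r : ℝ) : subexpExponent r 0 = 0 := by
  simp [subexpExponent]

lemma subexpExponent_of_nonneg (r : ℝ) {t : ℝ} (ht : 0 ≤ t) :
    subexpExponent r t = (t + 1) ^ r - 1 := by
  rcases ht.eq_or_lt with rfl | ht
  · simp
  · simp [subexpExponent, Real.sign_of_pos ht, abs_of_pos ht]

lemma subexpExponent_neg (r t : ℝ) : subexpExponent r (-t) = -subexpExponent r t := by
  simp [subexpExponent, Real.sign_neg]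

lemma subexpExponent_nonneg {r t : ℝ} (hr : 0 ≤ r) (ht : 0 ≤ t) : 0 ≤ subexpExponent r t := by
  rw [subexpExponent_of_nonneg r ht, sub_nonneg]
  exact one_le_rpow (by linarith) hr

lemma subexpExponent_monotone {r : ℝ} (hr : 0 ≤ r) : Monotone (subexpExponent r) :=
  monotone_of_odd_of_monotoneOn_nonneg (subexpExponent_neg r) fun s (hs : 0 ≤ s) t ht hst => by
    rw [subexpExponent_of_nonneg r hs, subexpExponent_of_nonneg r ht]
    gcongr

lemma subexpExponent_div_comp {r₁ r₂ : ℝ} (hr₂ : 0 < r₂) (t : ℝ) :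
    subexpExponent (r₁ / r₂) (subexpExponent r₂ t) = subexpExponent r₁ t := by
  suffices h : ∀ t, 0 ≤ t →
      subexpExponent (r₁ / r₂) (subexpExponent r₂ t) = subexpExponent r₁ t by
    rcases le_total 0 t with ht | ht
    · exact h t ht
    · have := h (-t) (neg_nonneg.2 ht)
      rwa [subexpExponent_neg, subexpExponent_neg, subexpExponent_neg, neg_inj] at this
  intro t ht
  rw [subexpExponent_of_nonneg _ (subexpExponent_nonneg hr₂.le ht), subexpExponent_of_nonneg _ ht,
    subexpExponent_of_nonneg _ ht, sub_add_cancel, ← rpow_mul (by linarith),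
    mul_div_cancel₀ _ hr₂.ne']

lemma subexpExponent_sub_le_rpow_sub_of_nonneg {ρ x y : ℝ} (hρ0 : 0 ≤ ρ) (hρ1 : ρ ≤ 1)
    (hx : 0 ≤ x) (hxy : x ≤ y) : subexpExponent ρ y - subexpExponent ρ x ≤ (y - x) ^ ρ := by
  rw [subexpExponent_of_nonneg ρ hx, subexpExponent_of_nonneg ρ (hx.trans hxy)]
  have := rpow_add_le_add_rpow (by linarith : 0 ≤ x + 1) (sub_nonneg.2 hxy) hρ0 hρ1
  rw [show x + 1 + (y - x) = y + 1 by ring] at this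
  linarith

lemma subexpExponent_sub_le_two_mul_rpow_sub {ρ x y : ℝ} (hρ0 : 0 ≤ ρ) (hρ1 : ρ ≤ 1)
    (hxy : x ≤ y) : subexpExponent ρ y - subexpExponent ρ x ≤ 2 * (y - x) ^ ρ := by
  have hgap : 0 ≤ (y - x) ^ ρ := rpow_nonneg (sub_nonneg.2 hxy) ρ
  rcases le_total 0 x with hx | hx
  · linarith [subexpExponent_sub_le_rpow_sub_of_nonneg hρ0 hρ1 hx hxy]
  rcases le_total 0 y with hy | hy
  · have hpos := subexpExponent_sub_le_rpow_sub_of_nonneg hρ0 hρ1 le_rfl hy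
    have hneg := subexpExponent_sub_le_rpow_sub_of_nonneg hρ0 hρ1 le_rfl (neg_nonneg.2 hx)
    rw [subexpExponent_neg] at hneg
    have hy' : y ^ ρ ≤ (y - x) ^ ρ := rpow_le_rpow hy (by linarith) hρ0
    have hx' : (-x) ^ ρ ≤ (y - x) ^ ρ := rpow_le_rpow (by linarith) (by linarith) hρ0
    simp only [subexpExponent_zero, sub_zero] at hpos hneg
    linarith
  · have := subexpExponent_sub_le_rpow_sub_of_nonneg hρ0 hρ1 (neg_nonneg.2 hy)
      (neg_le_neg hxy)
    rw [subexpExponent_neg, subexpExponent_neg, show -x - -y = y - x by ring] at this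
    linarith

lemma exists_rpow_le_add_mul {ρ c : ℝ} (hρ0 : 0 < ρ) (hρ1 : ρ < 1) (hc : 0 < c) :
    ∃ K, ∀ z, 0 ≤ z → z ^ ρ ≤ K + c * z := by
  set a := c / ρ
  have ha : 0 < a := div_pos hc hρ0
  -- `K` is the constant term of weighted AM-GM for `a * z` and `a ^ (-ρ / (1 - ρ))`
  refine ⟨(1 - ρ) * a ^ (-ρ / (1 - ρ)), fun z hz => ?_⟩
  have amgm := geom_mean_le_arith_mean2_weighted hρ0.le (sub_nonneg.2 hρ1.le)
    (mul_nonneg ha.le hz) (rpow_nonneg ha.le (-ρ / (1 - ρ))) (add_sub_cancel ρ 1)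
  have hgeom : (a * z) ^ ρ * (a ^ (-ρ / (1 - ρ))) ^ (1 - ρ) = z ^ ρ := by
    rw [mul_rpow ha.le hz, ← rpow_mul ha.le, div_mul_cancel₀ _ (sub_pos.2 hρ1).ne',
      rpow_neg ha.le]
    field_simp [(rpow_pos_of_pos ha ρ).ne']
  have harith : ρ * (a * z) = c * z := by
    simp only [a]
    field_simp
  linarith

lemma exists_subexpExponent_sub_le_add_mul {ρ c : ℝ} (hρ0 : 0 < ρ) (hρ1 : ρ < 1) (hc : 0 < c) :
    ∃ K, ∀ x y, x ≤ y → subexpExponent ρ y - subexpExponent ρ x ≤ K + c * (y - x) := by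
  obtain ⟨K, hK⟩ := exists_rpow_le_add_mul hρ0 hρ1 (half_pos hc)
  refine ⟨2 * K, fun x y hxy => ?_⟩
  have := subexpExponent_sub_le_two_mul_rpow_sub hρ0.le hρ1.le hxy
  have := hK (y - x) (sub_nonneg.2 hxy)
  linarith

theorem subexp_slower_general (r₁ r₂ : ℝ) (h0 : 0 < r₁) (h12 : r₁ < r₂) :
    ∀ α α' : ℝ, α < 0 → α' < 0 → ∃ M : ℝ, 1 ≤ M ∧
      ∀ t s : ℝ, s ≤ t →
        (subexpRate r₂ t / subexpRate r₂ s) ^ α ≤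
          M * (subexpRate r₁ t / subexpRate r₁ s) ^ α' := by
  intro α α' hα hα'
  have hr₂ : 0 < r₂ := h0.trans h12
  obtain ⟨K, hK⟩ := exists_subexpExponent_sub_le_add_mul (div_pos h0 hr₂)
    ((div_lt_one hr₂).2 h12) (div_pos_of_neg_of_neg hα hα')
  have hK0 : 0 ≤ K := by simpa using hK 0 0 le_rfl
  refine ⟨exp (-α' * K), one_le_exp (by nlinarith), fun t s hst => ?_⟩
  have hincr := hK _ _ (subexpExponent_monotone hr₂.le hst)
  rw [subexpExponent_div_comp hr₂, subexpExponent_div_comp hr₂] at hincr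
  simp only [subexpRate_eq_exp, ← exp_sub, ← exp_mul, ← exp_add, exp_le_exp]
  have hscaled := mul_le_mul_of_nonpos_left hincr hα'.le
  rw [mul_add, ← mul_assoc, mul_div_cancel₀ α hα'.ne] at hscaled
  linarith

/-- For 0 < r₁ < r₂ < 1 the subexponential rates satisfy u_{r₁} ≪ u_{r₂}. -/
theorem subexp_slower (r₁ r₂ : ℝ) (h0 : 0 < r₁) (h12 : r₁ < r₂) (h1 : r₂ < 1) :
    ∀ α α' : ℝ, α < 0 → α' < 0 → ∃ M : ℝ, 1 ≤ M ∧
      ∀ t s : ℝ, s ≤ t →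
        (subexpRate r₂ t / subexpRate r₂ s) ^ α ≤
          M * (subexpRate r₁ t / subexpRate r₁ s) ^ α' :=
  subexp_slower_general r₁ r₂ h0 h12
end

section
/- For 1 < r̃₁ < r̃₂, the superexponential rates satisfy s_{r̃₁} ≪ s_{r̃₂}: for all α, α̃ < 0 there exists M ≥ 1 such that (s_{r̃₂}(t)/s_{r̃₂}(s))^α ≤ M (s_{r̃₁}(t)/s_{r̃₁}(s))^{α̃} for all t ≥ s, where s_r(t) = exp(sgn(t)|t|^r). -/
noncomputable def superexpRate (r : ℝ) (t : ℝ) : ℝ := Real.exp (Real.sign t * |t| ^ r)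

lemma aux_add_rpow_le (x y p : ℝ) (hx : 0 ≤ x) (hy : 0 ≤ y) (hp : 1 ≤ p) :
    x ^ p + y ^ p ≤ (x + y) ^ p := by
  have h := NNReal.add_rpow_le_rpow_add x.toNNReal y.toNNReal hp
  rw [← NNReal.coe_le_coe] at h
  push_cast [NNReal.coe_rpow] at h
  rwa [Real.coe_toNNReal x hx, Real.coe_toNNReal y hy] at h

lemma aux_linear_le (c ρ : ℝ) (hc : 0 < c) (hρ : 1 < ρ) :
    ∃ K : ℝ, 0 ≤ K ∧ ∀ d : ℝ, 0 ≤ d → d ≤ c * d ^ ρ + K := by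
  set d₀ : ℝ := (1 / c) ^ (1 / (ρ - 1)) with hd₀def
  have hd₀ : 0 < d₀ := Real.rpow_pos_of_pos (by positivity) _
  refine ⟨d₀, hd₀.le, fun d hd => ?_⟩
  rcases le_or_gt d d₀ with h | h
  · have : 0 ≤ c * d ^ ρ := by positivity
    linarith
  · have hd₀pow : d₀ ^ (ρ - 1) = 1 / c := by
      rw [hd₀def, ← Real.rpow_mul (by positivity), one_div_mul_cancel (by linarith),
        Real.rpow_one]
    have hdpos : 0 < d := lt_trans hd₀ h
    have h1 : d₀ ^ (ρ - 1) ≤ d ^ (ρ - 1) :=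
      Real.rpow_le_rpow hd₀.le h.le (by linarith)
    have h2 : d ^ ρ = d ^ (ρ - 1) * d := by
      rw [← Real.rpow_add_one hdpos.ne' (ρ - 1)]; ring_nf
    have h3 : c * d ^ ρ ≥ c * ((1 / c) * d) := by
      rw [h2]
      have : (1 / c) * d ≤ d ^ (ρ - 1) * d := by
        rw [← hd₀pow]; exact mul_le_mul_of_nonneg_right h1 hdpos.le
      nlinarith
    have : c * ((1 / c) * d) = d := by field_simp
    linarith [hd₀.le]

lemma aux_diff_le (c ρ K : ℝ) (hc : 0 < c) (hρ : 1 < ρ) (hK : 0 ≤ K)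
    (hKall : ∀ d : ℝ, 0 ≤ d → d ≤ c * d ^ ρ + K)
    (x y : ℝ) (hx : 0 ≤ x) (hxy : x ≤ y) :
    y - x ≤ c * (y ^ ρ - x ^ ρ) + K := by
  have h1 : x ^ ρ + (y - x) ^ ρ ≤ y ^ ρ := by
    have := aux_add_rpow_le x (y - x) ρ hx (by linarith) hρ.le
    simpa using this
  have h2 := hKall (y - x) (by linarith)
  nlinarith

lemma aux_pow_diff_le (c r₁ r₂ K : ℝ) (hc : 0 < c) (h1 : 1 < r₁) (h12 : r₁ < r₂)
    (hK : 0 ≤ K)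
    (hKall : ∀ d : ℝ, 0 ≤ d → d ≤ c * d ^ (r₂ / r₁) + K)
    (a b : ℝ) (ha : 0 ≤ a) (hab : a ≤ b) :
    b ^ r₁ - a ^ r₁ ≤ c * (b ^ r₂ - a ^ r₂) + K := by
  have hr₁ : (0:ℝ) < r₁ := by linarith
  have hρ : 1 < r₂ / r₁ := (one_lt_div hr₁).2 h12
  have hb : 0 ≤ b := le_trans ha hab
  have key := aux_diff_le c (r₂ / r₁) K hc hρ hK hKall (a ^ r₁) (b ^ r₁)
    (Real.rpow_nonneg ha _) (Real.rpow_le_rpow ha hab hr₁.le)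
  have e1 : (a ^ r₁) ^ (r₂ / r₁) = a ^ r₂ := by
    rw [← Real.rpow_mul ha, mul_div_cancel₀ _ hr₁.ne']
  have e2 : (b ^ r₁) ^ (r₂ / r₁) = b ^ r₂ := by
    rw [← Real.rpow_mul hb, mul_div_cancel₀ _ hr₁.ne']
  rw [e1, e2] at key
  exact key

lemma sign_abs_rpow_of_nonneg (r u : ℝ) (hr : 0 < r) (hu : 0 ≤ u) :
    Real.sign u * |u| ^ r = u ^ r := by
  rcases eq_or_lt_of_le hu with h | h
  · simp [← h, Real.zero_rpow hr.ne']
  · rw [Real.sign_of_pos h, abs_of_pos h, one_mul]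

lemma sign_abs_rpow_of_nonpos (r u : ℝ) (hr : 0 < r) (hu : u ≤ 0) :
    Real.sign u * |u| ^ r = -((-u) ^ r) := by
  rcases eq_or_lt_of_le hu with h | h
  · simp [h, Real.zero_rpow hr.ne']
  · rw [Real.sign_of_neg h, abs_of_neg h, neg_one_mul]

/-- For 1 < r₁ < r₂ the superexponential rates satisfy s_{r₁} ≪ s_{r₂}. -/
theorem superexp_slower (r₁ r₂ : ℝ) (h1 : 1 < r₁) (h12 : r₁ < r₂) :
    ∀ α α' : ℝ, α < 0 → α' < 0 → ∃ M : ℝ, 1 ≤ M ∧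
      ∀ t s : ℝ, s ≤ t →
        (superexpRate r₂ t / superexpRate r₂ s) ^ α ≤
          M * (superexpRate r₁ t / superexpRate r₁ s) ^ α' := by
  intro α α' hα hα'
  have hr₁ : (0:ℝ) < r₁ := by linarith
  have hr₂ : (0:ℝ) < r₂ := by linarith
  set c : ℝ := α / α' with hcdef
  have hc : 0 < c := div_pos_of_neg_of_neg hα hα'
  have hρ : 1 < r₂ / r₁ := (one_lt_div hr₁).2 h12
  obtain ⟨K, hK, hKall⟩ := aux_linear_le c (r₂ / r₁) hc hρ
  -- core inequality on the exponents
  have hone : ∀ d : ℝ, 0 ≤ d → d ^ r₁ ≤ c * d ^ r₂ + K := by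
    intro d hd
    have := aux_pow_diff_le c r₁ r₂ K hc h1 h12 hK hKall 0 d le_rfl hd
    simpa [Real.zero_rpow hr₁.ne', Real.zero_rpow hr₂.ne'] using this
  have hcore : ∀ t s : ℝ, s ≤ t →
      Real.sign t * |t| ^ r₁ - Real.sign s * |s| ^ r₁ ≤
        c * (Real.sign t * |t| ^ r₂ - Real.sign s * |s| ^ r₂) + 2 * K := by
    intro t s hst
    rcases le_or_gt 0 s with hs | hs
    · have ht : 0 ≤ t := le_trans hs hst
      rw [sign_abs_rpow_of_nonneg r₁ t hr₁ ht, sign_abs_rpow_of_nonneg r₁ s hr₁ hs,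
        sign_abs_rpow_of_nonneg r₂ t hr₂ ht, sign_abs_rpow_of_nonneg r₂ s hr₂ hs]
      have := aux_pow_diff_le c r₁ r₂ K hc h1 h12 hK hKall s t hs hst
      linarith
    · rcases le_or_gt t 0 with ht | ht
      · rw [sign_abs_rpow_of_nonpos r₁ t hr₁ ht, sign_abs_rpow_of_nonpos r₁ s hr₁ hs.le,
          sign_abs_rpow_of_nonpos r₂ t hr₂ ht, sign_abs_rpow_of_nonpos r₂ s hr₂ hs.le]
        have := aux_pow_diff_le c r₁ r₂ K hc h1 h12 hK hKall (-t) (-s)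
          (by linarith) (by linarith)
        linarith
      · rw [sign_abs_rpow_of_nonneg r₁ t hr₁ ht.le, sign_abs_rpow_of_nonpos r₁ s hr₁ hs.le,
          sign_abs_rpow_of_nonneg r₂ t hr₂ ht.le, sign_abs_rpow_of_nonpos r₂ s hr₂ hs.le]
        have htK := hone t ht.le
        have hsK := hone (-s) (by linarith)
        linarith
  refine ⟨Real.exp (-α' * (2 * K)), Real.one_le_exp (by nlinarith), ?_⟩
  intro t s hst
  unfold superexpRate
  rw [← Real.exp_sub, ← Real.exp_sub, ← Real.exp_mul, ← Real.exp_mul, ← Real.exp_add]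
  rw [Real.exp_le_exp]
  have h := hcore t s hst
  have hmul := mul_le_mul_of_nonpos_left h (le_of_lt hα')
  have hca : α' * c = α := by
    rw [hcdef, mul_comm, div_mul_cancel₀ _ (ne_of_lt hα')]
  rw [mul_add, ← mul_assoc, hca] at hmul
  linarith
end

section
/- Let λ > 3η > 0 and consider the scalar equation ẋ = −(λ + η t sin t)x with evolution operator Φ(t,s) = exp(−∫_s^t (λ + ηu sin u) du). Then Φ admits a nonuniform exponential dichotomy with projector Id: |Φ(t,s)| ≤ e^{2η} e^{(−λ+η)(t−s)} e^{sgn(s)·2η·s} for all t ≥ s. -/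
open MeasureTheory intervalIntegral

/-- Evolution operator of ẋ = −(λ + η t sin t) x. -/
noncomputable def nueEvolution (lam η : ℝ) (t s : ℝ) : ℝ :=
  Real.exp (-(∫ u in s..t, (lam + η * u * Real.sin u)))

lemma nue_deriv (lam η : ℝ) (u : ℝ) :
    HasDerivAt (fun x : ℝ => lam * x + η * (Real.sin x - x * Real.cos x))
      (lam + η * u * Real.sin u) u := by
  have h1 : HasDerivAt (fun x : ℝ => x * Real.cos x)
      (1 * Real.cos u + u * (-Real.sin u)) u :=
    (hasDerivAt_id u).mul (Real.hasDerivAt_cos u)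
  have h2 : HasDerivAt (fun x : ℝ => Real.sin x - x * Real.cos x)
      (Real.cos u - (1 * Real.cos u + u * (-Real.sin u))) u :=
    (Real.hasDerivAt_sin u).sub h1
  have h3 : HasDerivAt (fun x : ℝ => lam * x + η * (Real.sin x - x * Real.cos x))
      (lam * 1 + η * (Real.cos u - (1 * Real.cos u + u * (-Real.sin u)))) u :=
    ((hasDerivAt_id u).const_mul lam).add (h2.const_mul η)
  convert h3 using 1
  ring

/-- Example 2.17: ẋ = −(λ + η t sin t)x admits a nonuniform exponential dichotomy
with projector Id and parameters (Id; e^{2η}, −λ+η, *, 2η, *). -/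
theorem nue_example_dichotomy (lam η : ℝ) (hη : 0 < η) (hlam : 3 * η < lam) :
    ∀ t s : ℝ, s ≤ t →
      |nueEvolution lam η t s| ≤
        Real.exp (2 * η) * Real.exp ((-lam + η) * (t - s)) *
          Real.exp (Real.sign s * (2 * η) * s) := by
  intro t s hst
  have hint : (∫ u in s..t, (lam + η * u * Real.sin u)) =
      (lam * t + η * (Real.sin t - t * Real.cos t)) -
      (lam * s + η * (Real.sin s - s * Real.cos s)) := by
    apply intervalIntegral.integral_eq_sub_of_hasDerivAt
    · intro u _; exact nue_deriv lam η u
    · apply Continuous.intervalIntegrable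
      continuity
  rw [nueEvolution, hint, abs_of_pos (Real.exp_pos _),
    ← Real.exp_add, ← Real.exp_add, Real.exp_le_exp]
  have hsign : Real.sign s * s = |s| := by
    rcases lt_trichotomy s 0 with h | h | h
    · rw [Real.sign_of_neg h, abs_of_neg h]; ring
    · simp [h]
    · rw [Real.sign_of_pos h, abs_of_pos h]; ring
  have habs_t : |t| ≤ (t - s) + |s| := by
    calc |t| = |(t - s) + s| := by ring_nf
    _ ≤ |t - s| + |s| := abs_add_le _ _
    _ = (t - s) + |s| := by rw [abs_of_nonneg (by linarith)]
  have h1 : t * Real.cos t ≤ |t| := by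
    calc t * Real.cos t ≤ |t * Real.cos t| := le_abs_self _
    _ = |t| * |Real.cos t| := abs_mul _ _
    _ ≤ |t| * 1 := by
        exact mul_le_mul_of_nonneg_left (Real.abs_cos_le_one t) (abs_nonneg t)
    _ = |t| := mul_one _
  have h2 : -(s * Real.cos s) ≤ |s| := by
    calc -(s * Real.cos s) ≤ |s * Real.cos s| := neg_le_abs _
    _ = |s| * |Real.cos s| := abs_mul _ _
    _ ≤ |s| * 1 := mul_le_mul_of_nonneg_left (Real.abs_cos_le_one s) (abs_nonneg s)
    _ = |s| := mul_one _
  have h3 := Real.neg_one_le_sin t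
  have h4 := Real.sin_le_one s
  have hrw : Real.sign s * (2 * η) * s = 2 * η * |s| := by
    rw [← hsign]; ring
  rw [hrw]
  nlinarith [mul_le_mul_of_nonneg_left habs_t hη.le,
    mul_le_mul_of_nonneg_left h1 hη.le, mul_le_mul_of_nonneg_left h2 hη.le]
end
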